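/- arXiv:2309.10340 — 7 statements merged into one kernel-verified Lean document; each statement's English description precedes it below -/
import Mathlib

section
/- Let m, n ≥ 1, let x¹, …, x^m ∈ ℝⁿ satisfy ‖xⁱ‖ ≤ 1 for all i, let y¹, …, y^m ∈ {−1, 1}, let b ∈ ℝⁿ, and let η > 0, σ ∈ ℝ, γ ∈ ℝ, ψ₁, …, ψ_m ∈ ℝ, Λ > 0, μ > 0. If 2Λμ > m, then the function g : ℝⁿ × ℝ^m → ℝ defined by g(w, a) = Σ_{i=1}^m aᵢ · log(1 + exp(−yⁱ · ⟨w, xⁱ⟩)) + (2/η)·⟨b, w⟩ + (Λ/2)·‖w‖² + μ·‖a‖² + σ/η + γ·η·Σ_{i=1}^m aᵢ·ψᵢ is strictly convex on the set {(w, a) : aᵢ ≥ 0 for all i}. -/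
private lemma hasDerivAt_L (t : ℝ) : HasDerivAt (fun t : ℝ => Real.log (1 + Real.exp (-t)))
    (-Real.exp (-t) / (1 + Real.exp (-t))) t := by
  have h1 : HasDerivAt (fun t : ℝ => 1 + Real.exp (-t)) (-Real.exp (-t)) t := by
    have h := (Real.hasDerivAt_exp (-t)).comp t (hasDerivAt_neg t)
    simpa using h.const_add 1
  simpa using h1.log (by positivity)

private lemma hasDerivAt_L' (t : ℝ) :
    HasDerivAt (fun t : ℝ => -Real.exp (-t) / (1 + Real.exp (-t)))
    (Real.exp (-t) / (1 + Real.exp (-t)) ^ 2) t := by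
  have h0 : HasDerivAt (fun t : ℝ => Real.exp (-t)) (-Real.exp (-t)) t := by
    have h := (Real.hasDerivAt_exp (-t)).comp t (hasDerivAt_neg t)
    exact h.congr_deriv (by ring)
  have h1 : HasDerivAt (fun t : ℝ => -Real.exp (-t)) (Real.exp (-t)) t := by
    exact h0.neg.congr_deriv (by ring)
  have h2 : HasDerivAt (fun t : ℝ => 1 + Real.exp (-t)) (-Real.exp (-t)) t := by
    simpa using h0.const_add 1
  have h3 := h1.div h2 (by positivity)
  refine h3.congr_deriv ?_
  have he : (0:ℝ) < 1 + Real.exp (-t) := by positivity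
  ring

private lemma L'_bound (t : ℝ) : |(-Real.exp (-t) / (1 + Real.exp (-t)))| ≤ 1 := by
  have h1 : (0:ℝ) < 1 + Real.exp (-t) := by positivity
  rw [abs_div, abs_neg, abs_of_pos (Real.exp_pos _), abs_of_pos h1, div_le_one h1]
  linarith

/-- Core two-variable inequality. -/
private lemma core_ineq (s s' α α' t u : ℝ) (hα : 0 ≤ α) (hα' : 0 ≤ α')
    (ht : 0 ≤ t) (hu : 0 ≤ u) (htu : t + u = 1) :
    (t * α + u * α') * Real.log (1 + Real.exp (-(t * s + u * s'))) ≤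
      t * (α * Real.log (1 + Real.exp (-s))) + u * (α' * Real.log (1 + Real.exp (-s')))
      + t * u * (|s - s'| * |α - α'|) := by
  set c : ℝ := s - s' with hc
  set d : ℝ := α - α' with hd
  set K : ℝ := |c| * |d| with hK
  set φ : ℝ → ℝ := fun v => (α' + v * d) * Real.log (1 + Real.exp (-(s' + v * c))) + K * v ^ 2 with hφ
  have hφconv : ConvexOn ℝ (Set.Icc (0:ℝ) 1) φ := by
    have hL : ∀ v : ℝ, HasDerivAt (fun v : ℝ => Real.log (1 + Real.exp (-(s' + v * c))))
        ((-Real.exp (-(s' + v * c)) / (1 + Real.exp (-(s' + v * c)))) * c) v := by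
      intro v
      have haff : HasDerivAt (fun v : ℝ => s' + v * c) c v := by
        simpa using ((hasDerivAt_id v).mul_const c).const_add s'
      exact (hasDerivAt_L (s' + v * c)).comp v haff
    have hL' : ∀ v : ℝ, HasDerivAt (fun v : ℝ => -Real.exp (-(s' + v * c)) / (1 + Real.exp (-(s' + v * c))))
        ((Real.exp (-(s' + v * c)) / (1 + Real.exp (-(s' + v * c))) ^ 2) * c) v := by
      intro v
      have haff : HasDerivAt (fun v : ℝ => s' + v * c) c v := by
        simpa using ((hasDerivAt_id v).mul_const c).const_add s'
      exact (hasDerivAt_L' (s' + v * c)).comp v haff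
    set f' : ℝ → ℝ := fun v => d * Real.log (1 + Real.exp (-(s' + v * c)))
      + (α' + v * d) * ((-Real.exp (-(s' + v * c)) / (1 + Real.exp (-(s' + v * c)))) * c)
      + K * (2 * v) with hf'
    set f'' : ℝ → ℝ := fun v => 2 * d * ((-Real.exp (-(s' + v * c)) / (1 + Real.exp (-(s' + v * c)))) * c)
      + (α' + v * d) * ((Real.exp (-(s' + v * c)) / (1 + Real.exp (-(s' + v * c))) ^ 2) * c * c)
      + K * 2 with hf''
    have hd1 : ∀ v : ℝ, HasDerivAt φ (f' v) v := by
      intro v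
      have h1 : HasDerivAt (fun v : ℝ => α' + v * d) d v := by
        simpa using ((hasDerivAt_id v).mul_const d).const_add α'
      have h2 := (h1.mul (hL v)).add (((hasDerivAt_pow 2 v).const_mul K))
      refine h2.congr_deriv ?_
      simp only [hf']
      ring
    have hd2 : ∀ v : ℝ, HasDerivAt f' (f'' v) v := by
      intro v
      have h1 : HasDerivAt (fun v : ℝ => α' + v * d) d v := by
        simpa using ((hasDerivAt_id v).mul_const d).const_add α'
      have hA : HasDerivAt (fun v : ℝ => d * Real.log (1 + Real.exp (-(s' + v * c))))
          (d * ((-Real.exp (-(s' + v * c)) / (1 + Real.exp (-(s' + v * c)))) * c)) v :=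
        (hL v).const_mul d
      have hB := h1.mul ((hL' v).mul_const c)
      have hC : HasDerivAt (fun v : ℝ => K * (2 * v)) (K * 2) v := by
        simpa using ((hasDerivAt_id v).const_mul (2:ℝ)).const_mul K
      have h2 := (hA.add hB).add hC
      refine h2.congr_deriv ?_
      simp only [hf'']
      ring
    refine convexOn_of_hasDerivWithinAt2_nonneg (f' := f') (f'' := f'') (convex_Icc 0 1) ?_ ?_ ?_ ?_
    · exact fun v _ => ((hd1 v).continuousAt).continuousWithinAt
    · exact fun v _ => ((hd1 v).hasDerivWithinAt)
    · exact fun v _ => ((hd2 v).hasDerivWithinAt)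
    · intro v hv
      rw [interior_Icc] at hv
      have hαv : 0 ≤ α' + v * d := by
        have : α' + v * d = (1 - v) * α' + v * α := by rw [hd]; ring
        rw [this]
        have h01 : (0:ℝ) ≤ 1 - v := by linarith [hv.2]
        have hv0 : (0:ℝ) ≤ v := hv.1.le
        exact add_nonneg (mul_nonneg h01 hα') (mul_nonneg hv0 hα)
      have hb := L'_bound (s' + v * c)
      have hnn : 0 ≤ (α' + v * d) * ((Real.exp (-(s' + v * c)) / (1 + Real.exp (-(s' + v * c))) ^ 2) * c * c) := by
        have h1 : (0:ℝ) < 1 + Real.exp (-(s' + v * c)) := by positivity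
        have hq : Real.exp (-(s' + v * c)) / (1 + Real.exp (-(s' + v * c))) ^ 2 * c * c
            = Real.exp (-(s' + v * c)) / (1 + Real.exp (-(s' + v * c))) ^ 2 * c ^ 2 := by ring
        rw [hq]
        exact mul_nonneg hαv (by positivity)
      have hcross : -(2 * (|c| * |d|)) ≤ 2 * d * ((-Real.exp (-(s' + v * c)) / (1 + Real.exp (-(s' + v * c)))) * c) := by
        have h3 : |2 * d * ((-Real.exp (-(s' + v * c)) / (1 + Real.exp (-(s' + v * c)))) * c)| ≤ 2 * (|c| * |d|) := by
          rw [abs_mul, abs_mul, abs_mul, abs_two]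
          have hb' : |(-Real.exp (-(s' + v * c)) / (1 + Real.exp (-(s' + v * c))))| * |c| ≤ |c| := by
            nlinarith [abs_nonneg c]
          nlinarith [abs_nonneg d, abs_nonneg c]
        linarith [neg_abs_le (2 * d * ((-Real.exp (-(s' + v * c)) / (1 + Real.exp (-(s' + v * c)))) * c)), h3]
      show 0 ≤ f'' v
      rw [hf'']
      dsimp only
      rw [hK]
      linarith
  -- evaluate convexity at endpoints 1 and 0
  have h01 : (1:ℝ) ∈ Set.Icc (0:ℝ) 1 := by norm_num
  have h00 : (0:ℝ) ∈ Set.Icc (0:ℝ) 1 := by norm_num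
  have := hφconv.2 h01 h00 ht hu htu
  have heval : t • (1:ℝ) + u • (0:ℝ) = t := by simp
  rw [heval] at this
  have e1 : φ t = (t * α + u * α') * Real.log (1 + Real.exp (-(t * s + u * s'))) + K * t ^ 2 := by
    rw [hφ]
    dsimp only
    have e2 : α' + t * d = t * α + u * α' := by rw [hd]; linear_combination (-α') * htu
    have e3 : s' + t * c = t * s + u * s' := by rw [hc]; linear_combination (-s') * htu
    rw [e2, e3]
  have e4 : φ 1 = α * Real.log (1 + Real.exp (-s)) + K := by
    rw [hφ]; dsimp only; rw [hd, hc]; ring_nf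
  have e5 : φ 0 = α' * Real.log (1 + Real.exp (-s')) := by
    rw [hφ]; dsimp only; ring_nf
  rw [e1, e4, e5] at this
  simp only [smul_eq_mul] at this
  have htt : K * t ^ 2 + t * u * K = t * K := by
    have hu1 : u = 1 - t := by linarith
    rw [hu1]; ring
  linarith

-- norm combo identity
private lemma normsq_combo {E : Type*} [NormedAddCommGroup E] [InnerProductSpace ℝ E] (x y : E)
    (t u : ℝ) (htu : t + u = 1) :
    ‖t • x + u • y‖ ^ 2 = t * ‖x‖ ^ 2 + u * ‖y‖ ^ 2 - t * u * ‖x - y‖ ^ 2 := by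
  have hu : u = 1 - t := by linarith
  subst hu
  have e1 : ‖t • x + (1-t) • y‖ ^ 2 = t^2 * ‖x‖^2 + 2*(t*(1-t))* inner ℝ x y + (1-t)^2*‖y‖^2 := by
    rw [← real_inner_self_eq_norm_sq]
    simp only [inner_add_add_self, real_inner_smul_left, real_inner_smul_right,
      real_inner_self_eq_norm_sq, real_inner_comm x y, norm_smul, mul_pow, Real.norm_eq_abs, sq_abs]
    ring
  have e2 : ‖x - y‖ ^ 2 = ‖x‖^2 - 2 * inner ℝ x y + ‖y‖^2 := by
    rw [← real_inner_self_eq_norm_sq]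
    simp only [inner_sub_sub_self, real_inner_self_eq_norm_sq, real_inner_comm x y]
    ring
  rw [e1, e2]; ring

private lemma euclid_normsq {k : ℕ} (v : EuclideanSpace ℝ (Fin k)) :
    ‖v‖ ^ 2 = ∑ i, (v i) ^ 2 := by
  rw [EuclideanSpace.norm_eq, Real.sq_sqrt (by positivity)]
  simp [sq_abs]

-- strictly convex quadratic on product
private lemma strict_quad {n m : ℕ} (c₁ c₂ : ℝ) (h1 : 0 < c₁) (h2 : 0 < c₂)
    {S : Set (EuclideanSpace ℝ (Fin n) × EuclideanSpace ℝ (Fin m))} (hS : Convex ℝ S) :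
    StrictConvexOn ℝ S (fun p => c₁ * ‖p.1‖ ^ 2 + c₂ * ‖p.2‖ ^ 2) := by
  refine ⟨hS, ?_⟩
  intro p hp q hq hne t u ht hu htu
  have e1 : (t • p + u • q).1 = t • p.1 + u • q.1 := rfl
  have e2 : (t • p + u • q).2 = t • p.2 + u • q.2 := rfl
  simp only [e1, e2, normsq_combo _ _ t u htu, smul_eq_mul]
  have hcase : p.1 ≠ q.1 ∨ p.2 ≠ q.2 := by
    by_contra h
    push_neg at h
    exact hne (Prod.ext h.1 h.2)
  have hn1 : 0 ≤ ‖p.1 - q.1‖ ^ 2 := by positivity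
  have hn2 : 0 ≤ ‖p.2 - q.2‖ ^ 2 := by positivity
  have htu' : 0 < t * u := mul_pos ht hu
  rcases hcase with h | h
  · have hpos : 0 < ‖p.1 - q.1‖ := norm_pos_iff.2 (sub_ne_zero.2 h)
    have : 0 < ‖p.1 - q.1‖ ^ 2 := pow_pos hpos 2
    nlinarith [mul_pos (mul_pos h1 htu') this, mul_nonneg (mul_nonneg h2.le htu'.le) hn2]
  · have hpos : 0 < ‖p.2 - q.2‖ := norm_pos_iff.2 (sub_ne_zero.2 h)
    have : 0 < ‖p.2 - q.2‖ ^ 2 := pow_pos hpos 2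
    nlinarith [mul_pos (mul_pos h2 htu') this, mul_nonneg (mul_nonneg h1.le htu'.le) hn1]

private lemma F_convex {m n : ℕ} (x : Fin m → EuclideanSpace ℝ (Fin n)) (hx : ∀ i, ‖x i‖ ≤ 1)
    (y : Fin m → ℝ) (hy : ∀ i, y i = -1 ∨ y i = 1) (δ : ℝ) (hδ : 0 < δ)
    (hS : Convex ℝ {p : EuclideanSpace ℝ (Fin n) × EuclideanSpace ℝ (Fin m) | ∀ i, 0 ≤ p.2 i}) :
    ConvexOn ℝ {p : EuclideanSpace ℝ (Fin n) × EuclideanSpace ℝ (Fin m) | ∀ i, 0 ≤ p.2 i}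
      (fun p => (∑ i, p.2 i * Real.log (1 + Real.exp (-(y i * inner ℝ p.1 (x i)))))
        + ((m : ℝ) * δ / 2) * ‖p.1‖ ^ 2 + (1 / (2 * δ)) * ‖p.2‖ ^ 2) := by
  refine ⟨hS, ?_⟩
  intro p hp q hq t u ht hu htu
  simp only [Set.mem_setOf_eq] at hp hq
  simp only [smul_eq_mul]
  have e1 : (t • p + u • q).1 = t • p.1 + u • q.1 := rfl
  have e2 : (t • p + u • q).2 = t • p.2 + u • q.2 := rfl
  have hsnd : ∀ i, (t • p + u • q).2 i = t * p.2 i + u * q.2 i := fun i => rfl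
  have hinner : ∀ i : Fin m, y i * inner ℝ (t • p + u • q).1 (x i)
      = t * (y i * inner ℝ p.1 (x i)) + u * (y i * inner ℝ q.1 (x i)) := by
    intro i
    rw [e1, inner_add_left, real_inner_smul_left, real_inner_smul_left]
    ring
  have key : ∀ i ∈ Finset.univ, (t • p + u • q).2 i *
        Real.log (1 + Real.exp (-(y i * inner ℝ (t • p + u • q).1 (x i))))
      ≤ t * (p.2 i * Real.log (1 + Real.exp (-(y i * inner ℝ p.1 (x i)))))
        + u * (q.2 i * Real.log (1 + Real.exp (-(y i * inner ℝ q.1 (x i)))))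
        + t * u * (δ / 2 * ‖p.1 - q.1‖ ^ 2 + 1 / (2 * δ) * (p.2 i - q.2 i) ^ 2) := by
    intro i _
    rw [hsnd i, hinner i]
    have h0 := core_ineq (y i * inner ℝ p.1 (x i)) (y i * inner ℝ q.1 (x i)) (p.2 i) (q.2 i)
      t u (hp i) (hq i) ht hu htu
    set a := |y i * inner ℝ p.1 (x i) - y i * inner ℝ q.1 (x i)| with ha
    set bb := |p.2 i - q.2 i| with hbb
    have ha0 : 0 ≤ a := abs_nonneg _
    have hb0 : 0 ≤ bb := abs_nonneg _
    have haW : a ≤ ‖p.1 - q.1‖ := by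
      rw [ha]
      have h1 : y i * inner ℝ p.1 (x i) - y i * inner ℝ q.1 (x i)
          = y i * inner ℝ (p.1 - q.1) (x i) := by
        rw [inner_sub_left]; ring
      rw [h1, abs_mul]
      have hy1 : |y i| = 1 := by rcases hy i with h | h <;> rw [h] <;> norm_num
      rw [hy1, one_mul]
      calc |inner ℝ (p.1 - q.1) (x i)| ≤ ‖p.1 - q.1‖ * ‖x i‖ := abs_real_inner_le_norm _ _
        _ ≤ ‖p.1 - q.1‖ * 1 := mul_le_mul_of_nonneg_left (hx i) (norm_nonneg _)
        _ = ‖p.1 - q.1‖ := mul_one _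
    have hcross : a * bb ≤ δ / 2 * ‖p.1 - q.1‖ ^ 2 + 1 / (2 * δ) * (p.2 i - q.2 i) ^ 2 := by
      have hb2 : bb ^ 2 = (p.2 i - q.2 i) ^ 2 := by rw [hbb, sq_abs]
      have e : δ / 2 * ‖p.1 - q.1‖ ^ 2 + 1 / (2 * δ) * bb ^ 2 - ‖p.1 - q.1‖ * bb
          = (δ * ‖p.1 - q.1‖ - bb) ^ 2 / (2 * δ) := by
        field_simp
        ring
      have hpos : 0 ≤ (δ * ‖p.1 - q.1‖ - bb) ^ 2 / (2 * δ) := by positivity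
      have h2 : a * bb ≤ ‖p.1 - q.1‖ * bb := mul_le_mul_of_nonneg_right haW hb0
      rw [← hb2]
      linarith
    have htu0 : 0 ≤ t * u := mul_nonneg ht hu
    have h3 := mul_le_mul_of_nonneg_left hcross htu0
    linarith
  have hsum := Finset.sum_le_sum key
  have hd2 : ∑ i, (p.2 i - q.2 i) ^ 2 = ‖p.2 - q.2‖ ^ 2 := by
    rw [euclid_normsq]
    exact Finset.sum_congr rfl fun i _ => rfl
  have hRHS : ∑ i, (t * (p.2 i * Real.log (1 + Real.exp (-(y i * inner ℝ p.1 (x i)))))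
        + u * (q.2 i * Real.log (1 + Real.exp (-(y i * inner ℝ q.1 (x i)))))
        + t * u * (δ / 2 * ‖p.1 - q.1‖ ^ 2 + 1 / (2 * δ) * (p.2 i - q.2 i) ^ 2))
      = t * ∑ i, p.2 i * Real.log (1 + Real.exp (-(y i * inner ℝ p.1 (x i))))
        + u * ∑ i, q.2 i * Real.log (1 + Real.exp (-(y i * inner ℝ q.1 (x i))))
        + t * u * ((m : ℝ) * δ / 2 * ‖p.1 - q.1‖ ^ 2 + 1 / (2 * δ) * ‖p.2 - q.2‖ ^ 2) := by
    rw [← hd2, Finset.sum_add_distrib, Finset.sum_add_distrib, ← Finset.mul_sum, ← Finset.mul_sum,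
      ← Finset.mul_sum]
    congr 1
    rw [Finset.sum_add_distrib, Finset.sum_const, Finset.card_univ, Fintype.card_fin,
      nsmul_eq_mul, ← Finset.mul_sum]
    ring
  rw [hRHS] at hsum
  have hn1 : ‖(t • p + u • q).1‖ ^ 2 = t * ‖p.1‖ ^ 2 + u * ‖q.1‖ ^ 2 - t * u * ‖p.1 - q.1‖ ^ 2 := by
    rw [e1]; exact normsq_combo _ _ t u htu
  have hn2 : ‖(t • p + u • q).2‖ ^ 2 = t * ‖p.2‖ ^ 2 + u * ‖q.2‖ ^ 2 - t * u * ‖p.2 - q.2‖ ^ 2 := by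
    rw [e2]; exact normsq_combo _ _ t u htu
  rw [hn1, hn2]
  nlinarith [hsum]

theorem stmt_0 (m n : ℕ) (hm : 1 ≤ m) (hn : 1 ≤ n)
    (x : Fin m → EuclideanSpace ℝ (Fin n)) (hx : ∀ i, ‖x i‖ ≤ 1)
    (y : Fin m → ℝ) (hy : ∀ i, y i = -1 ∨ y i = 1)
    (b : EuclideanSpace ℝ (Fin n))
    (η : ℝ) (hη : 0 < η) (σ γ : ℝ) (ψ : Fin m → ℝ)
    (Λ : ℝ) (hΛ : 0 < Λ) (μ : ℝ) (hμ : 0 < μ)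
    (hconv : 2 * Λ * μ > (m : ℝ)) :
    StrictConvexOn ℝ
      {p : EuclideanSpace ℝ (Fin n) × EuclideanSpace ℝ (Fin m) | ∀ i, 0 ≤ p.2 i}
      (fun p =>
        ∑ i, p.2 i * Real.log (1 + Real.exp (-(y i * inner ℝ p.1 (x i))))
          + (2 / η) * inner ℝ b p.1 + (Λ / 2) * ‖p.1‖ ^ 2
          + μ * ‖p.2‖ ^ 2 + σ / η + γ * η * ∑ i, p.2 i * ψ i) := by
  have hm' : (0 : ℝ) < m := by exact_mod_cast Nat.lt_of_lt_of_le Nat.zero_lt_one hm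
  set δ : ℝ := (Λ / (m : ℝ) + 1 / (2 * μ)) / 2 with hδdef
  have hkey : 1 / (2 * μ) < Λ / (m : ℝ) := by
    rw [div_lt_div_iff₀ (by positivity) hm']
    nlinarith
  have hδ1 : 1 / (2 * μ) < δ := by rw [hδdef]; linarith
  have hδ2 : δ < Λ / (m : ℝ) := by rw [hδdef]; linarith
  have hδpos : 0 < δ := lt_trans (by positivity) hδ1
  have hc1 : 0 < Λ / 2 - (m : ℝ) * δ / 2 := by
    have : δ * (m : ℝ) < Λ := (lt_div_iff₀ hm').1 hδ2
    nlinarith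
  have hc2 : 0 < μ - 1 / (2 * δ) := by
    have h1 : 1 < δ * (2 * μ) := (div_lt_iff₀ (by positivity)).1 hδ1
    have h2 : 1 / (2 * δ) < μ := by
      rw [div_lt_iff₀ (by positivity)]
      nlinarith
    linarith
  have hS : Convex ℝ {p : EuclideanSpace ℝ (Fin n) × EuclideanSpace ℝ (Fin m) | ∀ i, 0 ≤ p.2 i} := by
    intro p hp q hq t u ht hu htu
    intro i
    have : (t • p + u • q).2 i = t * p.2 i + u * q.2 i := rfl
    rw [Set.mem_setOf_eq] at hp hq
    show 0 ≤ (t • p + u • q).2 i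
    rw [this]
    exact add_nonneg (mul_nonneg ht (hp i)) (mul_nonneg hu (hq i))
  have hF := F_convex x hx y hy δ hδpos hS
  have hlin : ConvexOn ℝ {p : EuclideanSpace ℝ (Fin n) × EuclideanSpace ℝ (Fin m) | ∀ i, 0 ≤ p.2 i}
      (fun p => (2 / η) * inner ℝ b p.1 + σ / η + γ * η * ∑ i, p.2 i * ψ i) := by
    refine ⟨hS, ?_⟩
    intro p _ q _ t u ht hu htu
    simp only [smul_eq_mul]
    apply le_of_eq
    have e1 : (inner ℝ b (t • p + u • q).1 : ℝ) = t * inner ℝ b p.1 + u * inner ℝ b q.1 := by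
      have : (t • p + u • q).1 = t • p.1 + u • q.1 := rfl
      rw [this, inner_add_right, real_inner_smul_right, real_inner_smul_right]
    have e2 : ∑ i, (t • p + u • q).2 i * ψ i = t * ∑ i, p.2 i * ψ i + u * ∑ i, q.2 i * ψ i := by
      rw [Finset.mul_sum, Finset.mul_sum, ← Finset.sum_add_distrib]
      refine Finset.sum_congr rfl fun i _ => ?_
      have : (t • p + u • q).2 i = t * p.2 i + u * q.2 i := rfl
      rw [this]; ring
    rw [e1, e2]
    linear_combination (-(σ / η)) * htu
  have hQ := strict_quad (Λ / 2 - (m : ℝ) * δ / 2) (μ - 1 / (2 * δ)) hc1 hc2 hS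
  have htotal := (hF.add hlin).add_strictConvexOn hQ
  refine htotal.congr ?_
  intro p _
  simp only [Pi.add_apply]
  ring
end

section
/- Let E be a real Hilbert space, let f : E → ℝ be differentiable with gradient ∇f, assume f is μ-strongly convex for some μ > 0 (i.e., v ↦ f(v) − (μ/2)·‖v‖² is convex) and ∇f is K-Lipschitz for some K ≥ μ. Let 0 < γ ≤ 1/K, let v⁰ ∈ E, and define the gradient descent iterates v^{t+1} = v^t − γ·∇f(v^t). Let f* = inf_{v ∈ E} f(v). Then for every t ∈ ℕ, f(v^t) − f* ≤ (1 − γμ)^t · (f(v⁰) − f*). -/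
open InnerProductSpace Set

local notation "⟪" x ", " y "⟫" => @inner ℝ _ _ x y

/-- Derivative of `f` along a line, from the gradient. -/
lemma aux_lineDeriv {E : Type*} [NormedAddCommGroup E] [InnerProductSpace ℝ E]
    [CompleteSpace E] (f : E → ℝ) (f' : E → E) (hgrad : ∀ v, HasGradientAt f (f' v) v)
    (x d : E) (t : ℝ) :
    HasDerivAt (fun s : ℝ => f (x + s • d)) ⟪f' (x + t • d), d⟫ t := by
  have h1 : HasDerivAt (fun s : ℝ => x + s • d) d t := by
    simpa using ((hasDerivAt_id t).smul_const d).const_add x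
  have h2 := hasGradientAt_iff_hasFDerivAt.mp (hgrad (x + t • d))
  exact h2.comp_hasDerivAt t h1

/-- Strong convexity: first-order lower bound. -/
lemma aux_sc {E : Type*} [NormedAddCommGroup E] [InnerProductSpace ℝ E]
    [CompleteSpace E] (f : E → ℝ) (f' : E → E) (hgrad : ∀ v, HasGradientAt f (f' v) v)
    (μ : ℝ)
    (hsc : ConvexOn ℝ Set.univ (fun v => f v - μ / 2 * ‖v‖ ^ 2)) (x y : E) :
    f x + ⟪f' x, y - x⟫ + μ / 2 * ‖y - x‖ ^ 2 ≤ f y := by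
  set d := y - x with hd
  set φ : ℝ → ℝ := fun t => f (x + t • d) - μ / 2 * (‖x‖ ^ 2 + 2 * t * ⟪x, d⟫ + t ^ 2 * ‖d‖ ^ 2)
    with hφ
  have hexp : ∀ t : ℝ, ‖x + t • d‖ ^ 2 = ‖x‖ ^ 2 + 2 * t * ⟪x, d⟫ + t ^ 2 * ‖d‖ ^ 2 := by
    intro t
    have := norm_add_sq_real x (t • d)
    rw [this, real_inner_smul_right, norm_smul]
    simp [mul_pow]
    ring
  have hconv : ConvexOn ℝ Set.univ φ := by
    have := hsc.comp_affineMap (AffineMap.lineMap x y : ℝ →ᵃ[ℝ] E)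
    have heq : ((fun v => f v - μ / 2 * ‖v‖ ^ 2) ∘ (AffineMap.lineMap x y : ℝ →ᵃ[ℝ] E)) = φ := by
      funext t
      simp only [Function.comp_apply, AffineMap.lineMap_apply, hφ]
      simp only [vsub_eq_sub, vadd_eq_add]
      rw [show t • (y - x) + x = x + t • d by rw [hd]; abel, hexp t]
    rw [heq] at this
    simpa using this
  have hderiv : ∀ t : ℝ, HasDerivAt φ
      (⟪f' (x + t • d), d⟫ - μ / 2 * (2 * ⟪x, d⟫ + 2 * t * ‖d‖ ^ 2)) t := by
    intro t
    have h1 := aux_lineDeriv f f' hgrad x d t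
    have h2 : HasDerivAt (fun t : ℝ => μ / 2 * (‖x‖ ^ 2 + 2 * t * ⟪x, d⟫ + t ^ 2 * ‖d‖ ^ 2))
        (μ / 2 * (2 * ⟪x, d⟫ + 2 * t * ‖d‖ ^ 2)) t := by
      have : HasDerivAt (fun t : ℝ => ‖x‖ ^ 2 + 2 * t * ⟪x, d⟫ + t ^ 2 * ‖d‖ ^ 2)
          (2 * ⟪x, d⟫ + 2 * t * ‖d‖ ^ 2) t := by
        have ha : HasDerivAt (fun t : ℝ => 2 * t * ⟪x, d⟫) (2 * ⟪x, d⟫) t := by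
          simpa [mul_comm, mul_assoc] using
            ((hasDerivAt_id t).const_mul 2).mul_const (⟪x, d⟫)
        have hb : HasDerivAt (fun t : ℝ => t ^ 2 * ‖d‖ ^ 2) (2 * t * ‖d‖ ^ 2) t := by
          have := (hasDerivAt_pow 2 t).mul_const (‖d‖ ^ 2)
          exact this.congr_deriv (by norm_num)
        exact ((ha.const_add (‖x‖ ^ 2)).add hb).congr_deriv rfl
      simpa using this.const_mul (μ / 2)
    exact h1.sub h2
  have hslope := hconv.le_slope_of_hasDerivAt (mem_univ (0 : ℝ)) (mem_univ (1 : ℝ))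
    one_pos (hderiv 0)
  have hφ0 : φ 0 = f x - μ / 2 * ‖x‖ ^ 2 := by simp [hφ]
  have hφ1 : φ 1 = f y - μ / 2 * (‖x‖ ^ 2 + 2 * ⟪x, d⟫ + ‖d‖ ^ 2) := by
    simp [hφ, hd]
  rw [slope_def_field] at hslope
  simp only [hφ0, hφ1] at hslope
  have : ⟪f' (x + (0:ℝ) • d), d⟫ = ⟪f' x, d⟫ := by simp
  rw [this] at hslope
  nlinarith [hslope]

/-- Descent lemma from Lipschitz gradient. -/
lemma aux_descent {E : Type*} [NormedAddCommGroup E] [InnerProductSpace ℝ E]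
    [CompleteSpace E] (f : E → ℝ) (f' : E → E) (hgrad : ∀ v, HasGradientAt f (f' v) v)
    (K : ℝ) (hK0 : 0 ≤ K) (hlip : ∀ u v, ‖f' u - f' v‖ ≤ K * ‖u - v‖) (x y : E) :
    f y ≤ f x + ⟪f' x, y - x⟫ + K / 2 * ‖y - x‖ ^ 2 := by
  set d := y - x with hd
  set h : ℝ → ℝ := fun t => f (x + t • d) - t * ⟪f' x, d⟫ - K / 2 * t ^ 2 * ‖d‖ ^ 2 with hh
  have hderiv : ∀ t : ℝ, HasDerivAt h
      (⟪f' (x + t • d), d⟫ - ⟪f' x, d⟫ - K * t * ‖d‖ ^ 2) t := by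
    intro t
    have h1 := aux_lineDeriv f f' hgrad x d t
    have h2 : HasDerivAt (fun t : ℝ => t * ⟪f' x, d⟫) (⟪f' x, d⟫) t := by
      simpa using (hasDerivAt_id t).mul_const (⟪f' x, d⟫)
    have h3 : HasDerivAt (fun t : ℝ => K / 2 * t ^ 2 * ‖d‖ ^ 2) (K * t * ‖d‖ ^ 2) t := by
      have := ((hasDerivAt_pow 2 t).const_mul (K / 2)).mul_const (‖d‖ ^ 2)
      exact this.congr_deriv (by ring)
    exact (h1.sub h2).sub h3
  have hmono : AntitoneOn h (Icc (0 : ℝ) 1) := by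
    apply antitoneOn_of_deriv_nonpos (convex_Icc 0 1)
    · exact (Continuous.continuousOn (by
        exact continuous_iff_continuousAt.mpr fun t => (hderiv t).continuousAt))
    · intro t _
      exact (hderiv t).differentiableAt.differentiableWithinAt
    · intro t ht
      rw [interior_Icc] at ht
      rw [(hderiv t).deriv]
      have hle : ⟪f' (x + t • d) - f' x, d⟫ ≤ K * t * ‖d‖ ^ 2 := by
        calc ⟪f' (x + t • d) - f' x, d⟫ ≤ ‖f' (x + t • d) - f' x‖ * ‖d‖ :=
              real_inner_le_norm _ _
          _ ≤ (K * ‖(x + t • d) - x‖) * ‖d‖ := by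
              have := hlip (x + t • d) x
              nlinarith [norm_nonneg d]
          _ = K * t * ‖d‖ ^ 2 := by
              rw [show (x + t • d) - x = t • d by abel, norm_smul]
              simp [abs_of_pos ht.1]
              ring
      rw [inner_sub_left] at hle
      linarith
  have h01 := hmono (by norm_num : (0:ℝ) ∈ Icc (0:ℝ) 1)
    (by norm_num : (1:ℝ) ∈ Icc (0:ℝ) 1) zero_le_one
  have h0 : h 0 = f x := by simp [hh]
  have h1 : h 1 = f y - ⟪f' x, d⟫ - K / 2 * ‖d‖ ^ 2 := by simp [hh, hd]
  rw [h0, h1] at h01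
  linarith

theorem stmt_2 {E : Type*} [NormedAddCommGroup E] [InnerProductSpace ℝ E]
    [CompleteSpace E]
    (f : E → ℝ) (f' : E → E) (hgrad : ∀ v, HasGradientAt f (f' v) v)
    (μ : ℝ) (hμ : 0 < μ)
    (hsc : ConvexOn ℝ Set.univ (fun v => f v - μ / 2 * ‖v‖ ^ 2))
    (K : ℝ) (hK : μ ≤ K)
    (hlip : ∀ u v, ‖f' u - f' v‖ ≤ K * ‖u - v‖)
    (γ : ℝ) (hγ : 0 < γ) (hγK : γ ≤ 1 / K)
    (v : ℕ → E) (hiter : ∀ t, v (t + 1) = v t - γ • f' (v t)) :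
    ∀ t : ℕ, f (v t) - (⨅ u, f u) ≤ (1 - γ * μ) ^ t * (f (v 0) - ⨅ u, f u) := by
  have hK0 : 0 < K := lt_of_lt_of_le hμ hK
  -- lower bound: for all x y, f x - ‖f' x‖²/(2μ) ≤ f y
  have hlb : ∀ x y : E, f x - ‖f' x‖ ^ 2 / (2 * μ) ≤ f y := by
    intro x y
    have hsci := aux_sc f f' hgrad μ hsc x y
    have hi : -(‖f' x‖ * ‖y - x‖) ≤ ⟪f' x, y - x⟫_ℝ :=
      neg_le_of_abs_le (abs_real_inner_le_norm (f' x) (y - x))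
    have h2μ : (0:ℝ) < 2 * μ := by linarith
    have key : ‖f' x‖ * ‖y - x‖ - μ / 2 * ‖y - x‖ ^ 2 ≤ ‖f' x‖ ^ 2 / (2 * μ) := by
      rw [le_div_iff₀ h2μ]
      nlinarith [sq_nonneg (μ * ‖y - x‖ - ‖f' x‖)]
    linarith
  have hbdd : BddBelow (Set.range f) := by
    refine ⟨f (v 0) - ‖f' (v 0)‖ ^ 2 / (2 * μ), ?_⟩
    rintro _ ⟨y, rfl⟩
    exact hlb (v 0) y
  -- PL inequality: f x - f* ≤ ‖f' x‖²/(2μ)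
  have hPL : ∀ x : E, f x - (⨅ u, f u) ≤ ‖f' x‖ ^ 2 / (2 * μ) := by
    intro x
    have : f x - ‖f' x‖ ^ 2 / (2 * μ) ≤ ⨅ u, f u :=
      le_ciInf fun y => hlb x y
    linarith
  have hinf_le : ∀ x : E, (⨅ u, f u) ≤ f x := fun x => ciInf_le hbdd x
  -- one-step contraction
  have hstep : ∀ t : ℕ,
      f (v (t + 1)) - (⨅ u, f u) ≤ (1 - γ * μ) * (f (v t) - ⨅ u, f u) := by
    intro t
    have hdesc := aux_descent f f' hgrad K hK0.le hlip (v t) (v (t + 1))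
    have hvd : v (t + 1) - v t = -(γ • f' (v t)) := by rw [hiter t]; abel
    rw [hvd, inner_neg_right, norm_neg, norm_smul, real_inner_smul_right,
      real_inner_self_eq_norm_sq] at hdesc
    simp only [Real.norm_eq_abs, abs_of_pos hγ] at hdesc
    -- f (v (t+1)) ≤ f (v t) - γ ‖g‖² + K γ²/2 ‖g‖²
    have hγK' : γ * K ≤ 1 := by
      have := mul_le_mul_of_nonneg_right hγK hK0.le
      rwa [one_div_mul_cancel hK0.ne'] at this
    rw [mul_pow] at hdesc
    have hkey : K / 2 * (γ ^ 2 * ‖f' (v t)‖ ^ 2) ≤ γ / 2 * ‖f' (v t)‖ ^ 2 := by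
      nlinarith [mul_le_mul_of_nonneg_right hγK'
        (mul_nonneg hγ.le (sq_nonneg ‖f' (v t)‖)), sq_nonneg ‖f' (v t)‖]
    have hdec : f (v (t + 1)) ≤ f (v t) - γ / 2 * ‖f' (v t)‖ ^ 2 := by
      nlinarith [hdesc, hkey]
    have hpl := hPL (v t)
    have h1 : γ * μ * (f (v t) - ⨅ u, f u) ≤ γ / 2 * ‖f' (v t)‖ ^ 2 := by
      have h2 : f (v t) - (⨅ u, f u) ≤ ‖f' (v t)‖ ^ 2 / (2 * μ) := hpl
      have := mul_le_mul_of_nonneg_left h2 (le_of_lt (mul_pos hγ hμ))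
      calc γ * μ * (f (v t) - ⨅ u, f u) ≤ γ * μ * (‖f' (v t)‖ ^ 2 / (2 * μ)) := this
        _ = γ / 2 * ‖f' (v t)‖ ^ 2 := by field_simp
    linarith
  have hcontr : 0 ≤ 1 - γ * μ := by
    have : γ * μ ≤ (1 / K) * K := by
      have : μ ≤ K := hK
      have h1 : γ * μ ≤ γ * K := by nlinarith
      have h2 : γ * K ≤ (1 / K) * K := by nlinarith
      linarith
    rw [one_div_mul_cancel hK0.ne'] at this
    linarith
  intro t
  induction t with
  | zero => simp
  | succ n ih =>
    calc f (v (n + 1)) - (⨅ u, f u) ≤ (1 - γ * μ) * (f (v n) - ⨅ u, f u) := hstep n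
      _ ≤ (1 - γ * μ) * ((1 - γ * μ) ^ n * (f (v 0) - ⨅ u, f u)) :=
          mul_le_mul_of_nonneg_left ih hcontr
      _ = (1 - γ * μ) ^ (n + 1) * (f (v 0) - ⨅ u, f u) := by ring
end

section
/- Let E be a real Hilbert space, let f : E → ℝ be differentiable with gradient ∇f, and assume f is μ-strongly convex for some μ > 0 (i.e., v ↦ f(v) − (μ/2)·‖v‖² is convex). Then for every v ∈ E, f(v) − inf_{u ∈ E} f(u) ≤ ‖∇f(v)‖² / (2μ). -/
open Filter Topology

local notation "⟪" x ", " y "⟫" => @inner ℝ _ _ x y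

lemma first_order {E : Type*} [NormedAddCommGroup E] [InnerProductSpace ℝ E]
    (g : E → ℝ) (hsc : ConvexOn ℝ Set.univ g) (v u : E) (gv : ℝ)
    (hφ : HasDerivAt (fun t : ℝ => g (v + t • (u - v))) gv 0) :
    gv ≤ g u - g v := by
  set w := u - v with hw
  set φ : ℝ → ℝ := fun t => g (v + t • w) with hφdef
  have hslope : Tendsto (slope φ 0) (𝓝[>] (0:ℝ)) (𝓝 gv) :=
    (hasDerivAt_iff_tendsto_slope.mp hφ).mono_left
      (nhdsWithin_mono _ (fun t ht => ne_of_gt ht))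
  have hev : ∀ᶠ t in 𝓝[>] (0:ℝ), slope φ 0 t ≤ g u - g v := by
    filter_upwards [Ioo_mem_nhdsGT_of_mem (by norm_num : (0:ℝ) ∈ Set.Ico 0 1)] with t ht
    have hconv := hsc.2 (Set.mem_univ v) (Set.mem_univ u)
      (by linarith [ht.2] : (0:ℝ) ≤ 1 - t) (le_of_lt ht.1) (by ring)
    have heq : (1 - t) • v + t • u = v + t • w := by
      rw [hw]; module
    rw [heq] at hconv
    have h0 : φ 0 = g v := by simp [hφdef]
    have h1 : φ t = g (v + t • w) := rfl
    rw [slope_def_field]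
    simp only [smul_eq_mul] at hconv
    have : (φ t - φ 0) / (t - 0) ≤ g u - g v := by
      rw [sub_zero, div_le_iff₀ ht.1, h0, h1]
      nlinarith [hconv]
    simpa [slope_def_field] using this
  exact le_of_tendsto hslope hev

theorem stmt_3 {E : Type*} [NormedAddCommGroup E] [InnerProductSpace ℝ E]
    [CompleteSpace E]
    (f : E → ℝ) (f' : E → E) (hgrad : ∀ v, HasGradientAt f (f' v) v)
    (μ : ℝ) (hμ : 0 < μ)
    (hsc : ConvexOn ℝ Set.univ (fun v => f v - μ / 2 * ‖v‖ ^ 2)) :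
    ∀ v : E, f v - (⨅ u, f u) ≤ ‖f' v‖ ^ 2 / (2 * μ) := by
  intro v
  -- lower bound: ∀ u, f v - ‖f' v‖²/(2μ) ≤ f u
  have key : ∀ u : E, f v - ‖f' v‖ ^ 2 / (2 * μ) ≤ f u := by
    intro u
    set w := u - v with hw
    have hc : HasDerivAt (fun t : ℝ => v + t • w) w 0 := by
      simpa using ((hasDerivAt_id (0:ℝ)).smul_const w).const_add v
    have hcv : v + (0:ℝ) • w = v := by simp
    have hfd : HasFDerivAt f (InnerProductSpace.toDual ℝ E (f' v)) v :=
      hasGradientAt_iff_hasFDerivAt.mp (hgrad v)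
    have hφf : HasDerivAt (fun t : ℝ => f (v + t • w)) ⟪f' v, w⟫ 0 := by
      have hfd' : HasFDerivAt f (InnerProductSpace.toDual ℝ E (f' v))
          ((fun t : ℝ => v + t • w) 0) := by simpa using hfd
      simpa [Function.comp_def] using hfd'.comp_hasDerivAt 0 hc
    have hφn : HasDerivAt (fun t : ℝ => ‖v + t • w‖ ^ 2) (2 * ⟪v, w⟫) 0 := by
      have := hc.norm_sq
      simpa [hcv] using this
    have hφ : HasDerivAt (fun t : ℝ => f (v + t • w) - μ / 2 * ‖v + t • w‖ ^ 2)
        (⟪f' v, w⟫ - μ / 2 * (2 * ⟪v, w⟫)) 0 := hφf.sub (hφn.const_mul (μ / 2))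
    have hfo := first_order (fun x => f x - μ / 2 * ‖x‖ ^ 2) hsc v u _ hφ
    -- hfo : ⟪f' v, w⟫ - μ/2*(2*⟪v,w⟫) ≤ (f u - μ/2‖u‖²) - (f v - μ/2‖v‖²)
    have hquad : ⟪f' v, w⟫ + μ / 2 * ‖w‖ ^ 2 ≤ f u - f v := by
      have hexp : ‖w‖ ^ 2 = ‖u‖ ^ 2 - 2 * ⟪u, v⟫ + ‖v‖ ^ 2 := by
        rw [hw]; exact norm_sub_sq_real u v
      have hvw : ⟪v, w⟫ = ⟪u, v⟫ - ‖v‖ ^ 2 := by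
        rw [hw, inner_sub_right, real_inner_comm, real_inner_self_eq_norm_sq]
      nlinarith [hfo]
    have hmin : -(‖f' v‖ ^ 2 / (2 * μ)) ≤ ⟪f' v, w⟫ + μ / 2 * ‖w‖ ^ 2 := by
      have hcs := abs_real_inner_le_norm (f' v) w
      have h1 : -(‖f' v‖ * ‖w‖) ≤ ⟪f' v, w⟫ := neg_le_of_abs_le hcs
      have hq : ‖f' v‖ ^ 2 / (2 * μ) * (2 * μ) = ‖f' v‖ ^ 2 :=
        div_mul_cancel₀ _ (by positivity)
      nlinarith [h1, sq_nonneg (μ * ‖w‖ - ‖f' v‖), hq, hμ, norm_nonneg w,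
        norm_nonneg (f' v)]
    linarith [hmin, hquad]
  have hbdd : BddBelow (Set.range f) := ⟨f v - ‖f' v‖ ^ 2 / (2 * μ), by
    rintro x ⟨u, rfl⟩; exact key u⟩
  have : f v - ‖f' v‖ ^ 2 / (2 * μ) ≤ ⨅ u, f u := le_ciInf key
  linarith
end

section
/- Let ε : ℝ → ℝ be nonnegative, nonincreasing on [0, ∞), and integrable on [0, ∞). Define the payment t(c) = c·ε(c) + ∫_c^∞ ε(z) dz for c ≥ 0. Then: (i) individual rationality holds, i.e., c·ε(c) − t(c) ≤ 0 for every c ≥ 0; and (ii) incentive compatibility holds, i.e., c·ε(c) − t(c) ≤ c·ε(c') − t(c') for all c, c' ≥ 0. -/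
open MeasureTheory

theorem stmt_4 (ε : ℝ → ℝ) (hnn : ∀ c, 0 ≤ ε c)
    (hanti : AntitoneOn ε (Set.Ici 0))
    (hint : IntegrableOn ε (Set.Ici 0))
    (t : ℝ → ℝ) (ht : ∀ c, t c = c * ε c + ∫ z in Set.Ioi c, ε z) :
    (∀ c, 0 ≤ c → c * ε c - t c ≤ 0) ∧
      (∀ c c', 0 ≤ c → 0 ≤ c' → c * ε c - t c ≤ c * ε c' - t c') := by
  have hIoi : ∀ c : ℝ, 0 ≤ c → IntegrableOn ε (Set.Ioi c) := fun c hc =>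
    hint.mono_set (fun x hx => le_trans hc (le_of_lt hx))
  have hIoc : ∀ a b : ℝ, 0 ≤ a → IntegrableOn ε (Set.Ioc a b) := fun a b ha =>
    hint.mono_set (fun x hx => le_trans ha (le_of_lt hx.1))
  have hsplit : ∀ a b : ℝ, 0 ≤ a → a ≤ b →
      (∫ z in Set.Ioi a, ε z) = (∫ z in Set.Ioc a b, ε z) + ∫ z in Set.Ioi b, ε z := by
    intro a b ha hab
    rw [← setIntegral_union (Set.Ioc_disjoint_Ioi le_rfl) measurableSet_Ioi
      (hIoc a b ha) (hIoi b (ha.trans hab)), Set.Ioc_union_Ioi_eq_Ioi hab]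
  have hnonneg : ∀ c : ℝ, 0 ≤ ∫ z in Set.Ioi c, ε z := fun c =>
    setIntegral_nonneg measurableSet_Ioi (fun x _ => hnn x)
  have key : ∀ c c' : ℝ, 0 ≤ c → 0 ≤ c' →
      (∫ z in Set.Ioi c', ε z) - (∫ z in Set.Ioi c, ε z) ≤ (c - c') * ε c' := by
    intro c c' hc hc'
    rcases le_total c' c with h | h
    · rw [hsplit c' c hc' h]
      have hb : (∫ z in Set.Ioc c' c, ε z) ≤ ∫ z in Set.Ioc c' c, ε c' := by
        apply setIntegral_mono_on (hIoc c' c hc')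
          (integrableOn_const measure_Ioc_lt_top.ne) measurableSet_Ioc
        intro x hx
        exact hanti (Set.mem_Ici.2 hc') (Set.mem_Ici.2 (hc'.trans hx.1.le)) hx.1.le
      rw [setIntegral_const, Real.volume_real_Ioc_of_le (by linarith), smul_eq_mul] at hb
      have : (c' - c) * ε c' + (∫ z in Set.Ioc c' c, ε z) ≤ 0 := by nlinarith [hnn c']
      linarith
    · rw [hsplit c c' hc h]
      have hb : (∫ z in Set.Ioc c c', ε c') ≤ ∫ z in Set.Ioc c c', ε z := by
        apply setIntegral_mono_on (integrableOn_const measure_Ioc_lt_top.ne)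
          (hIoc c c' hc) measurableSet_Ioc
        intro x hx
        exact hanti (Set.mem_Ici.2 (hc.trans hx.1.le)) (Set.mem_Ici.2 hc') hx.2
      rw [setIntegral_const, Real.volume_real_Ioc_of_le (by linarith), smul_eq_mul] at hb
      linarith
  constructor
  · intro c hc
    rw [ht c]
    have := hnonneg c
    linarith
  · intro c c' hc hc'
    rw [ht c, ht c']
    have := key c c' hc hc'
    nlinarith
end

section
/- Let ε : ℝ → ℝ be nonnegative, measurable, and integrable on [0, ∞), and let f : ℝ → ℝ be a nonnegative measurable probability density on [0, ∞) (that is, ∫_0^∞ f = 1), with cumulative distribution function F(c) = ∫_0^c f(z) dz. Assume c ↦ c·ε(c)·f(c) is integrable on [0, ∞). Define t(c) = c·ε(c) + ∫_c^∞ ε(z) dz. Then the expected payment equals the expected virtual cost weighted privacy: ∫_0^∞ t(c)·f(c) dc = ∫_0^∞ ε(z)·(z·f(z) + F(z)) dz. -/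
/-!
Split `t c * f c = c ε(c) f(c) + (∫_{z > c} ε) f(c)`. By Tonelli over the triangle `0 < c < z`,
the second term integrates to `∫ ε(z) F(z) dz`, which is the whole identity. Everything is
nonnegative, so the computation is done with lower Lebesgue integrals, where no integrability
is needed: each Bochner integral is the `toReal` of the corresponding lower integral, including
the junk value `0` when that integral is infinite.
-/

open MeasureTheory Set
open scoped ENNReal

theorem integral_eq_toReal_lintegral_of_ofReal_eq {α : Type*} [MeasurableSpace α] {μ : Measure α}
    {φ : α → ℝ} {Φ : α → ℝ≥0∞} (hΦ : AEMeasurable Φ μ)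
    (hφ : ∀ᵐ x ∂μ, 0 ≤ φ x ∧ ENNReal.ofReal (φ x) = Φ x) :
    ∫ x, φ x ∂μ = (∫⁻ x, Φ x ∂μ).toReal := by
  have hφΦ : φ =ᵐ[μ] fun x => (Φ x).toReal := hφ.mono fun x ⟨hx, hxΦ⟩ => by
    simp only [← hxΦ, ENNReal.toReal_ofReal hx]
  rw [integral_eq_lintegral_of_nonneg_ae (hφ.mono fun x hx => hx.1)
    (hΦ.ennreal_toReal.aestronglyMeasurable.congr hφΦ.symm)]
  exact congrArg ENNReal.toReal (lintegral_congr_ae (hφ.mono fun x hx => hx.2))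

theorem setLIntegral_Ioi_lintegral_Ioi_mul_swap {α : Type*} [LinearOrder α] [TopologicalSpace α]
    [OrderClosedTopology α] [SecondCountableTopology α] [MeasurableSpace α]
    [OpensMeasurableSpace α] (μ : Measure α) [SFinite μ] {g h : α → ℝ≥0∞}
    (hg : Measurable g) (hh : Measurable h) (a : α) :
    ∫⁻ c in Ioi a, (∫⁻ z in Ioi c, g z ∂μ) * h c ∂μ
      = ∫⁻ z in Ioi a, g z * ∫⁻ c in Ioo a z, h c ∂μ ∂μ := by
  classical
  set k : α → α → ℝ≥0∞ := fun c z => if c < z then g z * h c else 0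
  have hk : Measurable (Function.uncurry k) :=
    Measurable.ite (measurableSet_lt measurable_fst measurable_snd)
      ((hg.comp measurable_snd).mul (hh.comp measurable_fst)) measurable_const
  have inner_z : ∀ c ∈ Ioi a, (∫⁻ z in Ioi c, g z ∂μ) * h c = ∫⁻ z in Ioi a, k c z ∂μ := by
    intro c hc
    have hkc : ∀ z, k c z = (Ioi c).indicator (fun z => g z * h c) z := fun z => by
      simp [k, indicator_apply]
    simp_rw [hkc, lintegral_indicator measurableSet_Ioi,
      Measure.restrict_restrict measurableSet_Ioi, Ioi_inter_Ioi, sup_eq_left.mpr (le_of_lt hc),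
      lintegral_mul_const _ hg]
  have inner_c : ∀ z ∈ Ioi a, g z * ∫⁻ c in Ioo a z, h c ∂μ = ∫⁻ c in Ioi a, k c z ∂μ := by
    intro z hz
    have hkz : ∀ c, k c z = (Iio z).indicator (fun c => g z * h c) c := fun c => by
      simp [k, indicator_apply]
    simp_rw [hkz, lintegral_indicator measurableSet_Iio,
      Measure.restrict_restrict measurableSet_Iio, Iio_inter_Ioi, lintegral_const_mul _ hh]
  rw [setLIntegral_congr_fun measurableSet_Ioi inner_z, lintegral_lintegral_swap hk.aemeasurable,
    setLIntegral_congr_fun measurableSet_Ioi inner_c]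

section Payment

variable {ε f : ℝ → ℝ} (hεnn : ∀ c, 0 ≤ ε c) (hfnn : ∀ c, 0 ≤ f c)
  (hεmeas : Measurable ε) (hfmeas : Measurable f)
include hεnn hfnn hεmeas hfmeas

theorem setIntegral_Ioi_payment_mul_eq (hεint : IntegrableOn ε (Ioi 0)) :
    ∫ c in Ioi 0, (c * ε c + ∫ z in Ioi c, ε z) * f c
      = (∫⁻ c in Ioi 0, ENNReal.ofReal (c * ε c * f c)
          + (∫⁻ z in Ioi c, ENNReal.ofReal (ε z)) * ENNReal.ofReal (f c)).toReal := by
  have tail_nonneg : ∀ c, 0 ≤ ∫ z in Ioi c, ε z := fun c =>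
    setIntegral_nonneg measurableSet_Ioi fun z _ => hεnn z
  refine integral_eq_toReal_lintegral_of_ofReal_eq ?_
    ((ae_restrict_mem measurableSet_Ioi).mono fun c (hc : 0 < c) => ⟨?_, ?_⟩)
  · have tail_antitone : Antitone fun c => ∫⁻ z in Ioi c, ENNReal.ofReal (ε z) :=
      fun a b hab => lintegral_mono_set (Ioi_subset_Ioi hab)
    exact (by fun_prop : Measurable fun c => ENNReal.ofReal (c * ε c * f c)).add
      (tail_antitone.measurable.mul hfmeas.ennreal_ofReal) |>.aemeasurable
  · exact mul_nonneg (add_nonneg (mul_nonneg hc.le (hεnn c)) (tail_nonneg c)) (hfnn c)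
  · rw [add_mul, ENNReal.ofReal_add (mul_nonneg (mul_nonneg hc.le (hεnn c)) (hfnn c))
      (mul_nonneg (tail_nonneg c) (hfnn c)), ENNReal.ofReal_mul (tail_nonneg c),
      ofReal_integral_eq_lintegral_ofReal (hεint.mono_set (Ioi_subset_Ioi hc.le))
        (.of_forall fun z => hεnn z)]

theorem setIntegral_Ioi_virtualCost_mul_eq (hfint : IntegrableOn f (Ioi 0)) :
    ∫ z in Ioi 0, ε z * (z * f z + ∫ c in (0 : ℝ)..z, f c)
      = (∫⁻ z in Ioi 0, ENNReal.ofReal (z * ε z * f z)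
          + ENNReal.ofReal (ε z) * ∫⁻ c in Ioo 0 z, ENNReal.ofReal (f c)).toReal := by
  have cdf_nonneg : ∀ z, 0 < z → 0 ≤ ∫ c in (0 : ℝ)..z, f c := fun z hz =>
    intervalIntegral.integral_nonneg hz.le fun c _ => hfnn c
  refine integral_eq_toReal_lintegral_of_ofReal_eq ?_
    ((ae_restrict_mem measurableSet_Ioi).mono fun z (hz : 0 < z) => ⟨?_, ?_⟩)
  · have cdf_monotone : Monotone fun z => ∫⁻ c in Ioo 0 z, ENNReal.ofReal (f c) :=
      fun a b hab => lintegral_mono_set (Ioo_subset_Ioo_right hab)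
    exact (by fun_prop : Measurable fun z => ENNReal.ofReal (z * ε z * f z)).add
      (hεmeas.ennreal_ofReal.mul cdf_monotone.measurable) |>.aemeasurable
  · exact mul_nonneg (hεnn z) (add_nonneg (mul_nonneg hz.le (hfnn z)) (cdf_nonneg z hz))
  · rw [show ε z * (z * f z + ∫ c in (0 : ℝ)..z, f c)
          = z * ε z * f z + ε z * ∫ c in (0 : ℝ)..z, f c by ring,
      ENNReal.ofReal_add (mul_nonneg (mul_nonneg hz.le (hεnn z)) (hfnn z))
        (mul_nonneg (hεnn z) (cdf_nonneg z hz)), ENNReal.ofReal_mul (hεnn z),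
      intervalIntegral.integral_of_le hz.le, integral_Ioc_eq_integral_Ioo,
      ofReal_integral_eq_lintegral_ofReal (hfint.mono_set Ioo_subset_Ioi_self)
        (.of_forall fun c => hfnn c)]

end Payment

theorem stmt_5_general (ε : ℝ → ℝ) (hεnn : ∀ c, 0 ≤ ε c) (hεmeas : Measurable ε)
    (hεint : IntegrableOn ε (Set.Ici 0))
    (f : ℝ → ℝ) (hfnn : ∀ c, 0 ≤ f c) (hfmeas : Measurable f)
    (hfprob : ∫ c in Set.Ici 0, f c = 1)
    (F : ℝ → ℝ) (hF : ∀ c, F c = ∫ z in (0 : ℝ)..c, f z)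
    (t : ℝ → ℝ) (ht : ∀ c, t c = c * ε c + ∫ z in Set.Ioi c, ε z) :
    ∫ c in Set.Ioi 0, t c * f c = ∫ z in Set.Ioi 0, ε z * (z * f z + F z) := by
  have hfint : IntegrableOn f (Ici 0) := Integrable.of_integral_ne_zero (by simp [hfprob])
  simp only [ht, hF]
  rw [setIntegral_Ioi_payment_mul_eq hεnn hfnn hεmeas hfmeas (hεint.mono_set Ioi_subset_Ici_self),
    setIntegral_Ioi_virtualCost_mul_eq hεnn hfnn hεmeas hfmeas (hfint.mono_set Ioi_subset_Ici_self),
    lintegral_add_left (by fun_prop), lintegral_add_left (by fun_prop),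
    setLIntegral_Ioi_lintegral_Ioi_mul_swap volume hεmeas.ennreal_ofReal hfmeas.ennreal_ofReal]

theorem stmt_5 (ε : ℝ → ℝ) (hεnn : ∀ c, 0 ≤ ε c) (hεmeas : Measurable ε)
    (hεint : IntegrableOn ε (Set.Ici 0))
    (f : ℝ → ℝ) (hfnn : ∀ c, 0 ≤ f c) (hfmeas : Measurable f)
    (hfprob : ∫ c in Set.Ici 0, f c = 1)
    (F : ℝ → ℝ) (hF : ∀ c, F c = ∫ z in (0 : ℝ)..c, f z)
    (hint : IntegrableOn (fun c => c * ε c * f c) (Set.Ici 0))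
    (t : ℝ → ℝ) (ht : ∀ c, t c = c * ε c + ∫ z in Set.Ioi c, ε z) :
    ∫ c in Set.Ioi 0, t c * f c = ∫ z in Set.Ioi 0, ε z * (z * f z + F z) :=
  stmt_5_general ε hεnn hεmeas hεint f hfnn hfmeas hfprob F hF t ht
end

section
/- Let n ≥ 1, let Λ > 0, and let A be a real symmetric n×n matrix such that A − Λ·I is positive semidefinite. Let u, v ∈ ℝⁿ with the Euclidean norms ‖u‖ ≤ 1 and ‖v‖ ≤ 1, let a ≥ 0, and let 0 ≤ s ≤ a and 0 ≤ t ≤ a. Then |det(A + s·u·uᵀ − t·v·vᵀ)| ≤ (1 + a/Λ)² · det(A). -/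
open Matrix

/-- PSD of a nonneg multiple of a self outer product. -/
lemma aux_psd_smul_vecMulVec {n : ℕ} {c : ℝ} (hc : 0 ≤ c) (w : Fin n → ℝ) :
    (c • vecMulVec w w).PosSemidef := by
  have h : c • vecMulVec w w =
      (replicateRow Unit (Real.sqrt c • w))ᴴ * replicateRow Unit (Real.sqrt c • w) := by
    rw [conjTranspose_replicateRow]
    ext i j
    simp only [Matrix.smul_apply, of_apply, vecMulVec_apply, mul_apply, smul_eq_mul,
      Pi.smul_apply, replicateCol_apply, replicateRow_apply, Finset.sum_const, Finset.card_univ,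
      star_trivial, Fintype.card_unit, one_smul]
    rw [mul_mul_mul_comm, Real.mul_self_sqrt hc]
  rw [h]
  exact posSemidef_conjTranspose_mul_self _

/-- Matrix determinant lemma, smul outer product form. -/
lemma aux_det_add_smul {n : ℕ} (B : Matrix (Fin n) (Fin n) ℝ) (hB : IsUnit B.det)
    (c : ℝ) (w : Fin n → ℝ) :
    (B + c • vecMulVec w w).det = B.det * (1 + c * (w ⬝ᵥ B⁻¹ *ᵥ w)) := by
  have h : c • vecMulVec w w = replicateCol Unit (c • w) * replicateRow Unit w := by
    rw [vecMulVec_eq Unit]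
    ext i j
    simp [mul_apply, mul_assoc]
  rw [h, det_add_replicateCol_mul_replicateRow hB]
  congr 1
  rw [det_unique]
  simp only [Matrix.add_apply, one_apply_eq]
  congr 1
  rw [← Matrix.replicateRow_vecMul, replicateRow_mul_replicateCol_apply, ← dotProduct_mulVec, mulVec_smul,
    dotProduct_smul]
  rw [dotProduct_mulVec]
  rfl

/-- Quadratic form bounds for the inverse. -/
lemma aux_quad {n : ℕ} {Λ : ℝ} (hΛ : 0 < Λ) {B : Matrix (Fin n) (Fin n) ℝ}
    (hB : (B - Λ • (1 : Matrix (Fin n) (Fin n) ℝ)).PosSemidef) :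
    B.PosDef ∧ ∀ w : Fin n → ℝ, w ⬝ᵥ w ≤ 1 →
      0 ≤ w ⬝ᵥ B⁻¹ *ᵥ w ∧ w ⬝ᵥ B⁻¹ *ᵥ w ≤ 1 / Λ := by
  have key : ∀ x : Fin n → ℝ, Λ * (x ⬝ᵥ x) ≤ x ⬝ᵥ B *ᵥ x := by
    intro x
    have h := hB.dotProduct_mulVec_nonneg x
    simp only [sub_mulVec, dotProduct_sub, smul_mulVec, one_mulVec,
      dotProduct_smul, star_trivial, smul_eq_mul] at h
    linarith
  have hBpd : B.PosDef := by
    have hherm : B.IsHermitian := by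
      have h1 : (B - Λ • (1 : Matrix (Fin n) (Fin n) ℝ)).IsHermitian := hB.1
      have h2 : (Λ • (1 : Matrix (Fin n) (Fin n) ℝ)).IsHermitian := by
        unfold IsHermitian
        rw [conjTranspose_smul]
        simp
      have := h1.add h2
      simpa using this
    refine posDef_iff_dotProduct_mulVec.mpr ⟨hherm, fun x hx => ?_⟩
    have hxx : 0 < x ⬝ᵥ x := by
      have := dotProduct_star_self_pos_iff (v := x) |>.2 hx
      simpa using this
    have := key x
    have : 0 < Λ * (x ⬝ᵥ x) := mul_pos hΛ hxx
    simp only [star_trivial]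
    linarith [key x]
  refine ⟨hBpd, fun w hw => ?_⟩
  set x := B⁻¹ *ᵥ w with hx
  have hBx : B *ᵥ x = w := by
    rw [hx, mulVec_mulVec, mul_nonsing_inv _ hBpd.det_pos.ne'.isUnit, one_mulVec]
  have hq0 : 0 ≤ w ⬝ᵥ x := by
    have := hBpd.inv.posSemidef.dotProduct_mulVec_nonneg w
    simpa using this
  have hq : x ⬝ᵥ B *ᵥ x = w ⬝ᵥ x := by rw [hBx, dotProduct_comm]
  have h1 : Λ * (x ⬝ᵥ x) ≤ w ⬝ᵥ x := hq ▸ key x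
  have hcs : (w ⬝ᵥ x) ^ 2 ≤ (w ⬝ᵥ w) * (x ⬝ᵥ x) := by
    have := Finset.sum_mul_sq_le_sq_mul_sq Finset.univ w x
    simpa [dotProduct, pow_two] using this
  have hxx0 : 0 ≤ x ⬝ᵥ x := by
    have := Finset.sum_nonneg (s := Finset.univ) (f := fun i => x i * x i)
      (fun i _ => mul_self_nonneg (x i))
    simpa [dotProduct] using this
  refine ⟨hq0, ?_⟩
  rw [le_div_iff₀ hΛ]
  have h2 : (w ⬝ᵥ x) ^ 2 ≤ x ⬝ᵥ x := le_trans hcs (by nlinarith)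
  have h3 : Λ * (w ⬝ᵥ x) ^ 2 ≤ w ⬝ᵥ x :=
    le_trans (by nlinarith) h1
  rcases eq_or_lt_of_le hq0 with h | h
  · nlinarith
  · have h4 : (w ⬝ᵥ x * Λ) * (w ⬝ᵥ x) ≤ 1 * (w ⬝ᵥ x) := by nlinarith
    exact le_of_mul_le_mul_right h4 h

theorem stmt_7 (n : ℕ) (hn : 1 ≤ n) (Λ : ℝ) (hΛ : 0 < Λ)
    (A : Matrix (Fin n) (Fin n) ℝ) (hsymm : A.IsSymm)
    (hpsd : (A - Λ • (1 : Matrix (Fin n) (Fin n) ℝ)).PosSemidef)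
    (u v : EuclideanSpace ℝ (Fin n)) (hu : ‖u‖ ≤ 1) (hv : ‖v‖ ≤ 1)
    (a : ℝ) (ha : 0 ≤ a) (s t : ℝ) (hs : 0 ≤ s ∧ s ≤ a) (ht : 0 ≤ t ∧ t ≤ a) :
    |(A + s • Matrix.of (fun i j => u i * u j)
        - t • Matrix.of (fun i j => v i * v j)).det| ≤
      (1 + a / Λ) ^ 2 * A.det := by
  obtain ⟨hs0, hsa⟩ := hs
  obtain ⟨ht0, hta⟩ := ht
  have hdiv : 0 ≤ a / Λ := div_nonneg ha hΛ.le
  -- norms to dot products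
  have hnorm : ∀ w : EuclideanSpace ℝ (Fin n), ‖w‖ ≤ 1 →
      (w : Fin n → ℝ) ⬝ᵥ (w : Fin n → ℝ) ≤ 1 := by
    intro w hw
    have h : (w : Fin n → ℝ) ⬝ᵥ (w : Fin n → ℝ) = @inner ℝ _ _ w w := by
      simp [dotProduct, PiLp.inner_apply, RCLike.inner_apply, mul_comm]
      rw [EuclideanSpace.norm_sq_eq]
      simp [sq]
    rw [h, real_inner_self_eq_norm_sq w]
    calc ‖w‖ ^ 2 ≤ 1 ^ 2 := by
          apply pow_le_pow_left₀ (norm_nonneg _) hw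
      _ = 1 := one_pow 2
  have huu := hnorm u hu
  have hvv := hnorm v hv
  -- A is posdef
  obtain ⟨hApd, hAq⟩ := aux_quad hΛ hpsd
  obtain ⟨hqu0, hqu1⟩ := hAq u huu
  -- B := A + s • uuᵀ
  set B := A + s • vecMulVec (u : Fin n → ℝ) u with hBdef
  have hBpsd : (B - Λ • (1 : Matrix (Fin n) (Fin n) ℝ)).PosSemidef := by
    have := hpsd.add (aux_psd_smul_vecMulVec hs0 (u : Fin n → ℝ))
    rwa [sub_add_eq_add_sub] at this
  obtain ⟨hBpd, hBq⟩ := aux_quad hΛ hBpsd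
  obtain ⟨hqv0, hqv1⟩ := hBq v hvv
  have hAdet : 0 < A.det := hApd.det_pos
  have hBdet : 0 < B.det := hBpd.det_pos
  -- det of B
  have hdetB : B.det = A.det * (1 + s * ((u : Fin n → ℝ) ⬝ᵥ A⁻¹ *ᵥ u)) :=
    aux_det_add_smul A hAdet.ne'.isUnit s _
  -- det of M
  have hM : A + s • Matrix.of (fun i j => u i * u j)
      - t • Matrix.of (fun i j => v i * v j)
      = B + (-t) • vecMulVec (v : Fin n → ℝ) v := by
    rw [hBdef, neg_smul, sub_eq_add_neg]
    rfl
  have hdetM : (A + s • Matrix.of (fun i j => u i * u j)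
      - t • Matrix.of (fun i j => v i * v j)).det
      = B.det * (1 + (-t) * ((v : Fin n → ℝ) ⬝ᵥ B⁻¹ *ᵥ v)) := by
    rw [hM]
    exact aux_det_add_smul B hBdet.ne'.isUnit (-t) _
  set qu := (u : Fin n → ℝ) ⬝ᵥ A⁻¹ *ᵥ u
  set qv := (v : Fin n → ℝ) ⬝ᵥ B⁻¹ *ᵥ v
  have hsqu : s * qu ≤ a / Λ := by
    calc s * qu ≤ a * (1 / Λ) := mul_le_mul hsa hqu1 hqu0 ha
      _ = a / Λ := by ring
  have htqv : t * qv ≤ a / Λ := by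
    calc t * qv ≤ a * (1 / Λ) := mul_le_mul hta hqv1 hqv0 ha
      _ = a / Λ := by ring
  have hsqu0 : 0 ≤ s * qu := mul_nonneg hs0 hqu0
  have htqv0 : 0 ≤ t * qv := mul_nonneg ht0 hqv0
  have habs : |1 + (-t) * qv| ≤ 1 + a / Λ := by
    rw [abs_le]
    constructor <;> nlinarith
  have hBle : B.det ≤ A.det * (1 + a / Λ) := by
    rw [hdetB]
    apply mul_le_mul_of_nonneg_left _ hAdet.le
    linarith
  rw [hdetM, abs_mul, abs_of_pos hBdet]
  calc B.det * |1 + (-t) * qv| ≤ (A.det * (1 + a / Λ)) * (1 + a / Λ) := by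
        apply mul_le_mul hBle habs (abs_nonneg _)
        positivity
    _ = (1 + a / Λ) ^ 2 * A.det := by ring
end

section
/- Let n ≥ 1, let w, d, d' ∈ ℝⁿ with Euclidean norms ‖d‖ ≤ 1 and ‖d'‖ ≤ 1, let y, y' ∈ {−1, 1}, and let a > 0. Then ‖ (a·y / (1 + exp(y·⟨w, d⟩)))·d − (a·y' / (1 + exp(y'·⟨w, d'⟩)))·d' ‖ < 2a. -/
lemma aux_17 {n : ℕ} (v : EuclideanSpace ℝ (Fin n)) (hv : ‖v‖ ≤ 1)
    (y t a : ℝ) (hy : y = -1 ∨ y = 1) (ha : 0 < a) :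
    ‖(a * y / (1 + Real.exp t)) • v‖ < a := by
  have h1 : (1:ℝ) < 1 + Real.exp t := by nlinarith [Real.exp_pos t]
  have hay : |a * y| = a := by
    rcases hy with h | h <;> simp [h, abs_of_pos ha]
  calc ‖(a * y / (1 + Real.exp t)) • v‖ = |a * y / (1 + Real.exp t)| * ‖v‖ := by
        rw [norm_smul, Real.norm_eq_abs]
    _ ≤ |a * y / (1 + Real.exp t)| := by
        nlinarith [abs_nonneg (a * y / (1 + Real.exp t))]
    _ = a / (1 + Real.exp t) := by rw [abs_div, hay, abs_of_pos (by linarith)]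
    _ < a := by
        rw [div_lt_iff₀ (by linarith)]
        nlinarith

theorem stmt_17 (n : ℕ) (hn : 1 ≤ n)
    (w d d' : EuclideanSpace ℝ (Fin n))
    (hd : ‖d‖ ≤ 1) (hd' : ‖d'‖ ≤ 1)
    (y y' : ℝ) (hy : y = -1 ∨ y = 1) (hy' : y' = -1 ∨ y' = 1)
    (a : ℝ) (ha : 0 < a) :
    ‖(a * y / (1 + Real.exp (y * inner ℝ w d))) • d -
        (a * y' / (1 + Real.exp (y' * inner ℝ w d'))) • d'‖ < 2 * a := by
  have h1 := aux_17 d hd y (y * inner ℝ w d) a hy ha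
  have h2 := aux_17 d' hd' y' (y' * inner ℝ w d') a hy' ha
  calc _ ≤ _ + _ := norm_sub_le _ _
    _ < 2 * a := by linarith
end
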